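/- arXiv:1409.1205 — 2 statements merged into one kernel-verified Lean document; each statement's English description precedes it below -/
import Mathlib

section
/- Let X₁, X₂ : ℝ^d → ℝ^d be smooth vector fields and let ρ : ℝ^d → ℝ be a smooth, everywhere positive function. Then the following two conditions are equivalent: (1) for every j ∈ {1,…,d}, Σ_{i=1}^d ∂ᵢ( ρ·((X₁)ᵢ(X₂)ⱼ − (X₁)ⱼ(X₂)ᵢ) ) = 0 identically on ℝ^d; (2) at every point, [X₁,X₂] = (div(ρX₂)/ρ)·X₁ − (div(ρX₁)/ρ)·X₂. (This is the paper's reduction of equation (frobenius) to equation (frobenius2dim) in the case n = 2.) -/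
open MeasureTheory

noncomputable section

/-- `ℝ^d` as functions `Fin d → ℝ`. -/
abbrev Rd (d : ℕ) := Fin d → ℝ

/-- The Lie bracket `[X,Y](x) = DY(x)[X(x)] − DX(x)[Y(x)]` of vector fields on `ℝ^d`. -/
def lieBracket {d : ℕ} (X Y : Rd d → Rd d) (x : Rd d) : Rd d :=
  fderiv ℝ Y x (X x) - fderiv ℝ X x (Y x)

/-- The divergence `div X(x) = Σᵢ ∂Xᵢ/∂xᵢ(x)`. -/
def divg {d : ℕ} (X : Rd d → Rd d) (x : Rd d) : ℝ :=
  ∑ i, fderiv ℝ X x (Pi.single i 1) i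

/-
The `i`-th summand is `∂ᵢ Wᵢ` for the vector field `W = X₂ⱼ • ρX₁ − X₁ⱼ • ρX₂`, so the sum is
`div W`. The product rule `div (g • V) = g div V + Dg[V]` expands it to
`div(ρX₁) X₂ⱼ − div(ρX₂) X₁ⱼ + ρ [X₁,X₂]ⱼ`, which vanishes for all `j` exactly when the bracket
identity holds, since `ρ > 0`.
-/

section

variable {d : ℕ} {x : Rd d}

theorem ContinuousLinearMap.apply_eq_sum_single {F : Type*} [AddCommGroup F] [Module ℝ F]
    [TopologicalSpace F] (D : Rd d →L[ℝ] F) (v : Rd d) :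
    D v = ∑ i, v i • D (Pi.single i 1) := by
  have hsingle : ∀ i, (Pi.single i 1 : Rd d) = fun j => if i = j then 1 else 0 :=
    fun i => funext fun j => by simp [Pi.single_apply, eq_comm]
  simp only [hsingle]
  exact D.toLinearMap.pi_apply_eq_sum_univ v

theorem sum_fderiv_apply_single_eq_divg {W : Rd d → Rd d} (hW : DifferentiableAt ℝ W x) :
    ∑ i, fderiv ℝ (fun y => W y i) x (Pi.single i 1) = divg W x := by
  simp [divg, fderiv_apply hW]

theorem divg_sub {V W : Rd d → Rd d} (hV : DifferentiableAt ℝ V x)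
    (hW : DifferentiableAt ℝ W x) :
    divg (fun y => V y - W y) x = divg V x - divg W x := by
  simp [divg, fderiv_fun_sub hV hW, Finset.sum_sub_distrib]

theorem divg_smul {g : Rd d → ℝ} {V : Rd d → Rd d} (hg : DifferentiableAt ℝ g x)
    (hV : DifferentiableAt ℝ V x) :
    divg (fun y => g y • V y) x = g x * divg V x + fderiv ℝ g x (V x) := by
  rw [(fderiv ℝ g x).apply_eq_sum_single]
  simp [divg, fderiv_fun_smul hg hV, Finset.sum_add_distrib, Finset.mul_sum, mul_comm]

theorem sum_fderiv_wedge_eq {X₁ X₂ : Rd d → Rd d} {ρ : Rd d → ℝ}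
    (h₁ : DifferentiableAt ℝ X₁ x) (h₂ : DifferentiableAt ℝ X₂ x)
    (hρ : DifferentiableAt ℝ ρ x) (j : Fin d) :
    ∑ i, fderiv ℝ (fun y => ρ y * (X₁ y i * X₂ y j - X₁ y j * X₂ y i)) x (Pi.single i 1)
      = divg (fun y => ρ y • X₁ y) x * X₂ x j - divg (fun y => ρ y • X₂ y) x * X₁ x j
        + ρ x * lieBracket X₁ X₂ x j := by
  have hW : ∀ i, (fun y => ρ y * (X₁ y i * X₂ y j - X₁ y j * X₂ y i))
      = fun y => (X₂ y j • (ρ y • X₁ y) - X₁ y j • (ρ y • X₂ y)) i := by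
    intro i; funext y; simp only [Pi.sub_apply, Pi.smul_apply, smul_eq_mul]; ring
  simp_rw [hW]
  rw [sum_fderiv_apply_single_eq_divg (by fun_prop), divg_sub (by fun_prop) (by fun_prop),
    divg_smul (g := fun y => X₂ y j) (by fun_prop) (by fun_prop),
    divg_smul (g := fun y => X₁ y j) (by fun_prop) (by fun_prop)]
  simp only [lieBracket, fderiv_apply h₁, fderiv_apply h₂, ContinuousLinearMap.comp_apply,
    ContinuousLinearMap.proj_apply, map_smul, Pi.sub_apply, smul_eq_mul]
  ring

end

/-- The `n = 2` reduction of equation (frobenius) to (frobenius2dim). -/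
theorem frobenius_two_dim (d : ℕ) (X₁ X₂ : Rd d → Rd d)
    (h1 : ContDiff ℝ (⊤ : ℕ∞) X₁) (h2 : ContDiff ℝ (⊤ : ℕ∞) X₂)
    (ρ : Rd d → ℝ) (hρ : ContDiff ℝ (⊤ : ℕ∞) ρ) (hρpos : ∀ x, 0 < ρ x) :
    (∀ (j : Fin d) (x : Rd d),
        ∑ i : Fin d, fderiv ℝ (fun y => ρ y * (X₁ y i * X₂ y j - X₁ y j * X₂ y i))
          x (Pi.single i 1) = 0) ↔
    (∀ x : Rd d, lieBracket X₁ X₂ x =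
        (divg (fun y => ρ y • X₂ y) x / ρ x) • X₁ x
          - (divg (fun y => ρ y • X₁ y) x / ρ x) • X₂ x) := by
  have hρ0 : ∀ x, ρ x ≠ 0 := fun x => (hρpos x).ne'
  have hsum : ∀ j x, ∑ i : Fin d, fderiv ℝ (fun y => ρ y * (X₁ y i * X₂ y j - X₁ y j * X₂ y i))
      x (Pi.single i 1) = ρ x * (lieBracket X₁ X₂ x - ((divg (fun y => ρ y • X₂ y) x / ρ x) • X₁ x
          - (divg (fun y => ρ y • X₁ y) x / ρ x) • X₂ x)) j := by
    intro j x
    rw [sum_fderiv_wedge_eq (h1.differentiable (by simp) x) (h2.differentiable (by simp) x)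
      (hρ.differentiable (by simp) x)]
    simp only [Pi.sub_apply, Pi.smul_apply, smul_eq_mul]
    field_simp [hρ0 x]
    ring
  simp only [hsum, mul_eq_zero, hρ0, false_or]
  rw [forall_comm]
  simp only [funext_iff, Pi.sub_apply, sub_eq_zero]

end
end

section
/- Let ψ : ℝ → ℝ be continuous, nonnegative, even (ψ(−s) = ψ(s)), compactly supported, and normalized so that ∫_{ℝ^d} ψ(|w|) dw = 1, where |·| is the Euclidean norm on ℝ^d. Let A : (ℝ^d)^n → ℝ be a continuous multilinear map (linear in each of its n arguments). Then for all v₁, …, vₙ ∈ ℝ^d, ∫_{(ℝ^d)^n} A(w₁,…,wₙ) · ψ(|w₁ − v₁|) ⋯ ψ(|wₙ − vₙ|) dw₁ ⋯ dwₙ = A(v₁,…,vₙ). (This is the key identity V(dω) = dω used in the proof of Lemma 4.1 of the paper: vertical mollification by a symmetric kernel fixes fiberwise multilinear functions.) -/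
/-!
Integrating out one variable at a time, multilinearity reduces the identity to the case of a
linear form `T`, where `∫ φ(x - v) T x dx = T (∫ φ(x - v) x dx)`. Translating by `v`, the
barycentre of the translated kernel is `∫ φ(x) x dx + (∫ φ) v = v`: the first moment of an even
kernel vanishes and its mass is one.
-/

open MeasureTheory

theorem HasCompactSupport.fintype_prod {ι : Type*} [Fintype ι] {X : ι → Type*}
    [∀ i, TopologicalSpace (X i)] {R : Type*} [CommMonoidWithZero R] {f : ∀ i, X i → R}
    (hf : ∀ i, HasCompactSupport (f i)) :
    HasCompactSupport fun x : ∀ i, X i => ∏ i, f i (x i) := by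
  refine .intro' (isCompact_univ_pi hf) (isClosed_set_pi fun i _ => isClosed_tsupport (f i))
    fun x hx => ?_
  obtain ⟨i, hi⟩ : ∃ i, x i ∉ tsupport (f i) := by simpa using hx
  exact Finset.prod_eq_zero (Finset.mem_univ i) (image_eq_zero_of_notMem_tsupport hi)

theorem HasCompactSupport.comp_norm {E : Type*} [NormedAddCommGroup E] [ProperSpace E]
    {M : Type*} [Zero M] {ψ : ℝ → M} (hψ : HasCompactSupport ψ) :
    HasCompactSupport fun x : E => ψ ‖x‖ := by
  obtain ⟨R, hR⟩ := hψ.isCompact.isBounded.subset_closedBall 0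
  refine .intro (isCompact_closedBall 0 R) fun x hx => image_eq_zero_of_notMem_tsupport ?_
  intro hψx
  have : ‖x‖ ≤ R := by simpa using hR hψx
  simp_all

theorem MeasureTheory.integral_pi_fin_succ {n : ℕ} {α : Type*} [MeasurableSpace α]
    {μ : Measure α} [SigmaFinite μ] {G : Type*} [NormedAddCommGroup G] [NormedSpace ℝ G]
    {F : (Fin (n + 1) → α) → G} (hF : Integrable F (Measure.pi fun _ => μ)) :
    ∫ x, F x ∂Measure.pi (fun _ => μ) =
      ∫ x, ∫ y, F (Fin.cons x y) ∂Measure.pi (fun _ => μ) ∂μ := by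
  have hmp := (measurePreserving_piFinSuccAbove (fun _ : Fin (n + 1) => μ) 0).symm
  have hcons : ∀ p : α × (Fin n → α),
      (MeasurableEquiv.piFinSuccAbove (fun _ => α) 0).symm p = Fin.cons p.1 p.2 := by
    intro p
    simp [Fin.insertNthEquiv]
  have hF' : Integrable (fun p : α × (Fin n → α) => F (Fin.cons p.1 p.2))
      (μ.prod (Measure.pi fun _ => μ)) := by
    simpa only [Function.comp_def, hcons] using
      (hmp.integrable_comp_emb (MeasurableEquiv.measurableEmbedding _)).mpr hF
  rw [← hmp.integral_comp']
  simp only [hcons]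
  exact integral_prod _ hF'

section Moments

variable {E : Type*} [NormedAddCommGroup E] [NormedSpace ℝ E] [MeasurableSpace E]
  {μ : Measure E} {φ : E → ℝ}

theorem integral_smul_self_eq_zero_of_even [MeasurableNeg E] [μ.IsNegInvariant]
    (hφ : ∀ x, φ (-x) = φ x) : ∫ x, φ x • x ∂μ = 0 := by
  have h := integral_neg_eq_self (fun x => φ x • x) μ
  simp only [hφ, smul_neg, integral_neg] at h
  have h2 : (2 : ℝ) • ∫ x, φ x • x ∂μ = 0 := by
    rw [two_smul]
    nth_rw 1 [← h]
    exact neg_add_cancel _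
  exact (smul_eq_zero.mp h2).resolve_left two_ne_zero

theorem MeasureTheory.Integrable.comp_sub_smul_self [MeasurableAdd E] [μ.IsAddRightInvariant]
    (hφi : Integrable φ μ) (hφm : Integrable (fun x => φ x • x) μ) (v : E) :
    Integrable (fun x => φ (x - v) • x) μ := by
  have h := (hφm.add (hφi.smul_const v)).comp_sub_right v
  simpa only [Pi.add_apply, ← smul_add, sub_add_cancel] using h

variable [CompleteSpace E] [MeasurableAdd E] [MeasurableNeg E] [μ.IsAddRightInvariant]
  [μ.IsNegInvariant]

theorem integral_comp_sub_smul_self (hφ : ∀ x, φ (-x) = φ x) (hφi : Integrable φ μ)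
    (hφm : Integrable (fun x => φ x • x) μ) (hφ1 : ∫ x, φ x ∂μ = 1) (v : E) :
    ∫ x, φ (x - v) • x ∂μ = v := by
  rw [← integral_add_right_eq_self _ v]
  simp only [add_sub_cancel_right, smul_add]
  rw [integral_add hφm (hφi.smul_const v), integral_smul_self_eq_zero_of_even hφ,
    integral_smul_const, hφ1, zero_add, one_smul]

theorem integral_comp_sub_mul_continuousLinearMap (hφ : ∀ x, φ (-x) = φ x)
    (hφi : Integrable φ μ) (hφm : Integrable (fun x => φ x • x) μ) (hφ1 : ∫ x, φ x ∂μ = 1)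
    (T : E →L[ℝ] ℝ) (v : E) :
    ∫ x, φ (x - v) * T x ∂μ = T v := by
  have h := T.integral_comp_comm (hφi.comp_sub_smul_self hφm v)
  simp only [map_smul, smul_eq_mul] at h
  rw [h, integral_comp_sub_smul_self hφ hφi hφm hφ1]

end Moments

section Multilinear

variable {E : Type*} [NormedAddCommGroup E] [NormedSpace ℝ E] [FiniteDimensional ℝ E]
  [MeasurableSpace E] [BorelSpace E] {μ : Measure E} [μ.IsAddHaarMeasure] {φ : E → ℝ}

theorem integral_continuousMultilinearMap_mul_prod_comp_sub (hφc : Continuous φ)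
    (hφs : HasCompactSupport φ) (hφ : ∀ x, φ (-x) = φ x) (hφ1 : ∫ x, φ x ∂μ = 1) {n : ℕ}
    (A : ContinuousMultilinearMap ℝ (fun _ : Fin n => E) ℝ) (v : Fin n → E) :
    ∫ w, A w * ∏ i, φ (w i - v i) ∂Measure.pi (fun _ => μ) = A v := by
  induction n with
  | zero => simp [measureReal_def, Subsingleton.elim _ v]
  | succ n ih =>
    have hφi : Integrable φ μ := hφc.integrable_of_hasCompactSupport hφs
    have hφm : Integrable (fun x => φ x • x) μ :=
      (hφc.smul continuous_id).integrable_of_hasCompactSupport hφs.smul_right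
    have hF : Integrable (fun w => A w * ∏ i, φ (w i - v i)) (Measure.pi fun _ => μ) :=
      (A.cont.mul (continuous_finsetProd _ fun i _ =>
        hφc.comp ((continuous_apply i).sub continuous_const))).integrable_of_hasCompactSupport
        (HasCompactSupport.fintype_prod fun i =>
          hφs.comp_homeomorph (Homeomorph.subRight (v i))).mul_left
    have hinner : ∀ x,
        ∫ y, A (Fin.cons x y) * ∏ i, φ ((Fin.cons x y : Fin (n + 1) → E) i - v i)
          ∂Measure.pi (fun _ => μ) = φ (x - v 0) * A.toContinuousLinearMap v 0 x := by
      intro x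
      have hA : A.toContinuousLinearMap v 0 x = A.curryLeft x (Fin.tail v) := by
        rw [A.curryLeft_apply, ← Fin.update_cons_zero (v 0), Fin.cons_self_tail]
        rfl
      simp only [Fin.prod_univ_succ, Fin.cons_zero, Fin.cons_succ, ← A.curryLeft_apply]
      rw [hA, ← ih (A.curryLeft x) (Fin.tail v), ← integral_const_mul]
      congr 1 with y
      simp only [Fin.tail]
      ring
    rw [integral_pi_fin_succ hF]
    simp only [hinner]
    rw [integral_comp_sub_mul_continuousLinearMap hφ hφi hφm hφ1]
    simp

end Multilinear

theorem vertical_mollification_fixes_multilinear_general (d n : ℕ)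
    (ψ : ℝ → ℝ) (hψc : Continuous ψ)
    (hψsupp : HasCompactSupport ψ)
    (hψnorm : (∫ w : EuclideanSpace ℝ (Fin d), ψ ‖w‖) = 1)
    (A : ContinuousMultilinearMap ℝ (fun _ : Fin n => EuclideanSpace ℝ (Fin d)) ℝ)
    (v : Fin n → EuclideanSpace ℝ (Fin d)) :
    (∫ w : Fin n → EuclideanSpace ℝ (Fin d), A w * ∏ i, ψ ‖w i - v i‖) = A v := by
  rw [volume_pi]
  exact integral_continuousMultilinearMap_mul_prod_comp_sub (φ := fun x => ψ ‖x‖)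
    (hψc.comp continuous_norm) hψsupp.comp_norm (fun x => congrArg ψ (norm_neg x)) hψnorm A v

/-- Vertical mollification by a symmetric kernel fixes fiberwise multilinear functions:
`∫ A(w) ψ(|w₁−v₁|)⋯ψ(|wₙ−vₙ|) dw = A(v)`. -/
theorem vertical_mollification_fixes_multilinear (d n : ℕ) (hd : 1 ≤ d) (hn : 1 ≤ n)
    (ψ : ℝ → ℝ) (hψc : Continuous ψ) (hψnn : ∀ s, 0 ≤ ψ s) (hψev : ∀ s, ψ (-s) = ψ s)
    (hψsupp : HasCompactSupport ψ)
    (hψnorm : (∫ w : EuclideanSpace ℝ (Fin d), ψ ‖w‖) = 1)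
    (A : ContinuousMultilinearMap ℝ (fun _ : Fin n => EuclideanSpace ℝ (Fin d)) ℝ)
    (v : Fin n → EuclideanSpace ℝ (Fin d)) :
    (∫ w : Fin n → EuclideanSpace ℝ (Fin d), A w * ∏ i, ψ ‖w i - v i‖) = A v :=
  vertical_mollification_fixes_multilinear_general d n ψ hψc hψsupp hψnorm A v
end
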